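/- arXiv:1403.1218 — 2 statements merged into one kernel-verified Lean document; each statement's English description precedes it below -/
import Mathlib

section
/- For i = 1, 2 let C_i = {im U_{i,l} : l = 1, …, N_i} be an (n_i, N_i, d_i, k)_q code with N_i ≥ 2, where U_{i,l} ∈ F_q^{k×n_i} are matrices of rank k whose rowspaces im U_{i,1}, …, im U_{i,N_i} are pairwise distinct. Define the following sets of subspaces of F_q^{n_1+n_2}: C̃_1 := {im(U_{1,l} | 0_{k×n_2}) : 1 ≤ l ≤ N_1}, C̃_2 := {im(0_{k×n_1} | U_{2,l}) : 1 ≤ l ≤ N_2}, C̃_3 := {im(U_{1,l} | U_{2,m}) : 1 ≤ l ≤ N_1, 1 ≤ m ≤ N_2}, where (A | B) denotes the horizontal block concatenation. Then C := C̃_1 ∪ C̃_2 ∪ C̃_3 is an (n_1 + n_2, N_1 + N_2 + N_1N_2, min{d_1, d_2}, k)_q code. -/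
open Module

/-- The rowspace `im U = {xU : x ∈ F^k}` of a matrix `U`. -/
noncomputable def rowSpace (F : Type) [Field F] {k : ℕ} {ι : Type} [Fintype ι]
    (M : Matrix (Fin k) ι F) : Submodule F (ι → F) :=
  LinearMap.range M.vecMulLinear

/-- Horizontal block concatenation `(A | B)` of two matrices with `k` rows. -/
def hcat {F : Type} [Field F] {k n₁ n₂ : ℕ} (A : Matrix (Fin k) (Fin n₁) F)
    (B : Matrix (Fin k) (Fin n₂) F) : Matrix (Fin k) (Fin (n₁ + n₂)) F :=
  Matrix.of fun i => Fin.append (A i) (B i)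

section helpers
variable {F : Type} [Field F] {k n₁ n₂ : ℕ}

def Lmap (F : Type) [Field F] (n₁ n₂ : ℕ) : (Fin (n₁ + n₂) → F) →ₗ[F] (Fin n₁ → F) :=
  LinearMap.funLeft F F (Fin.castAdd n₂)

def Rmap (F : Type) [Field F] (n₁ n₂ : ℕ) : (Fin (n₁ + n₂) → F) →ₗ[F] (Fin n₂ → F) :=
  LinearMap.funLeft F F (Fin.natAdd n₁)

lemma Lmap_append (a : Fin n₁ → F) (b : Fin n₂ → F) : Lmap F n₁ n₂ (Fin.append a b) = a := by
  funext j; simp [Lmap, LinearMap.funLeft_apply, Fin.append_left]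

lemma Rmap_append (a : Fin n₁ → F) (b : Fin n₂ → F) : Rmap F n₁ n₂ (Fin.append a b) = b := by
  funext j; simp [Rmap, LinearMap.funLeft_apply, Fin.append_right]

lemma vecMul_hcat (x : Fin k → F) (A : Matrix (Fin k) (Fin n₁) F)
    (B : Matrix (Fin k) (Fin n₂) F) :
    Matrix.vecMul x (hcat A B) = Fin.append (Matrix.vecMul x A) (Matrix.vecMul x B) := by
  funext j
  refine Fin.addCases (fun j => ?_) (fun j => ?_) j <;>
    simp [Matrix.vecMul, hcat, Fin.append_left, Fin.append_right, dotProduct]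

lemma mem_rowSpace {ι : Type} [Fintype ι] (M : Matrix (Fin k) ι F) (v : ι → F) :
    v ∈ rowSpace F M ↔ ∃ x, Matrix.vecMul x M = v := by
  simp [rowSpace, LinearMap.mem_range, Matrix.vecMulLinear_apply]

lemma vecMulLinear_inj_of_rank {ι : Type} [Fintype ι] (M : Matrix (Fin k) ι F)
    (h : Module.finrank F ↥(rowSpace F M) = k) : Function.Injective M.vecMulLinear := by
  rw [← LinearMap.ker_eq_bot]
  have h2 := LinearMap.finrank_range_add_finrank_ker M.vecMulLinear
  rw [finrank_fintype_fun_eq_card, Fintype.card_fin] at h2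
  have : finrank F ↥(LinearMap.ker M.vecMulLinear) = 0 := by
    have : finrank F ↥(LinearMap.range M.vecMulLinear) = k := h
    omega
  exact Submodule.finrank_eq_zero.mp this

lemma hcat_inj_left (A : Matrix (Fin k) (Fin n₁) F) (B : Matrix (Fin k) (Fin n₂) F)
    (hA : Function.Injective A.vecMulLinear) :
    Function.Injective (hcat A B).vecMulLinear := by
  rw [← LinearMap.ker_eq_bot, LinearMap.ker_eq_bot']
  intro x hx
  rw [Matrix.vecMulLinear_apply, vecMul_hcat] at hx
  have : Matrix.vecMul x A = 0 := by
    have := congrArg (Lmap F n₁ n₂) hx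
    rwa [Lmap_append, map_zero] at this
  rw [← LinearMap.ker_eq_bot, LinearMap.ker_eq_bot'] at hA
  exact hA x (by rwa [Matrix.vecMulLinear_apply])

lemma hcat_inj_right (A : Matrix (Fin k) (Fin n₁) F) (B : Matrix (Fin k) (Fin n₂) F)
    (hB : Function.Injective B.vecMulLinear) :
    Function.Injective (hcat A B).vecMulLinear := by
  rw [← LinearMap.ker_eq_bot, LinearMap.ker_eq_bot']
  intro x hx
  rw [Matrix.vecMulLinear_apply, vecMul_hcat] at hx
  have : Matrix.vecMul x B = 0 := by
    have := congrArg (Rmap F n₁ n₂) hx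
    rwa [Rmap_append, map_zero] at this
  rw [← LinearMap.ker_eq_bot, LinearMap.ker_eq_bot'] at hB
  exact hB x (by rwa [Matrix.vecMulLinear_apply])

lemma finrank_rowSpace_of_inj {ι : Type} [Fintype ι] (M : Matrix (Fin k) ι F)
    (h : Function.Injective M.vecMulLinear) : finrank F ↥(rowSpace F M) = k := by
  rw [rowSpace, LinearMap.finrank_range_of_inj h, finrank_fintype_fun_eq_card, Fintype.card_fin]

/-- the embedding `a ↦ (a | 0)` -/
def emb₁ (F : Type) [Field F] (n₁ n₂ : ℕ) : (Fin n₁ → F) →ₗ[F] (Fin (n₁ + n₂) → F) where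
  toFun a := Fin.append a 0
  map_add' a b := by
    funext j
    refine Fin.addCases (fun j => ?_) (fun j => ?_) j <;>
      simp [Fin.append_left, Fin.append_right]
  map_smul' c a := by
    funext j
    refine Fin.addCases (fun j => ?_) (fun j => ?_) j <;>
      simp [Fin.append_left, Fin.append_right]

/-- the embedding `b ↦ (0 | b)` -/
def emb₂ (F : Type) [Field F] (n₁ n₂ : ℕ) : (Fin n₂ → F) →ₗ[F] (Fin (n₁ + n₂) → F) where
  toFun b := Fin.append 0 b
  map_add' a b := by
    funext j
    refine Fin.addCases (fun j => ?_) (fun j => ?_) j <;>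
      simp [Fin.append_left, Fin.append_right]
  map_smul' c a := by
    funext j
    refine Fin.addCases (fun j => ?_) (fun j => ?_) j <;>
      simp [Fin.append_left, Fin.append_right]

lemma emb₁_inj : Function.Injective (emb₁ F n₁ n₂) := by
  intro a b h
  have := congrArg (Lmap F n₁ n₂) h
  rwa [show (emb₁ F n₁ n₂) a = Fin.append a 0 from rfl,
    show (emb₁ F n₁ n₂) b = Fin.append b 0 from rfl, Lmap_append, Lmap_append] at this

lemma emb₂_inj : Function.Injective (emb₂ F n₁ n₂) := by
  intro a b h
  have := congrArg (Rmap F n₁ n₂) h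
  rwa [show (emb₂ F n₁ n₂) a = Fin.append (0 : Fin n₁ → F) a from rfl,
    show (emb₂ F n₁ n₂) b = Fin.append (0 : Fin n₁ → F) b from rfl, Rmap_append, Rmap_append] at this

lemma rowSpace_hcat_zero_right (A : Matrix (Fin k) (Fin n₁) F) :
    rowSpace F (hcat A (0 : Matrix (Fin k) (Fin n₂) F)) =
      (rowSpace F A).map (emb₁ F n₁ n₂) := by
  ext v
  simp only [mem_rowSpace, Submodule.mem_map]
  constructor
  · rintro ⟨x, rfl⟩
    exact ⟨Matrix.vecMul x A, ⟨x, rfl⟩, by rw [vecMul_hcat, Matrix.vecMul_zero]; rfl⟩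
  · rintro ⟨a, ⟨x, rfl⟩, rfl⟩
    exact ⟨x, by rw [vecMul_hcat, Matrix.vecMul_zero]; rfl⟩

lemma rowSpace_hcat_zero_left (B : Matrix (Fin k) (Fin n₂) F) :
    rowSpace F (hcat (0 : Matrix (Fin k) (Fin n₁) F) B) =
      (rowSpace F B).map (emb₂ F n₁ n₂) := by
  ext v
  simp only [mem_rowSpace, Submodule.mem_map]
  constructor
  · rintro ⟨x, rfl⟩
    exact ⟨Matrix.vecMul x B, ⟨x, rfl⟩, by rw [vecMul_hcat, Matrix.vecMul_zero]; rfl⟩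
  · rintro ⟨b, ⟨x, rfl⟩, rfl⟩
    exact ⟨x, by rw [vecMul_hcat, Matrix.vecMul_zero]; rfl⟩

end helpers

/-- The subspace distance `d_S(V,W) = dim V + dim W − 2 dim (V ∩ W)`. -/
noncomputable def sdist (F : Type) [Field F] {M : Type} [AddCommGroup M] [Module F M]
    (V W : Submodule F M) : ℕ :=
  Module.finrank F ↥V + Module.finrank F ↥W - 2 * Module.finrank F ↥(V ⊓ W)

/-- The subspace distance of a code: `d_S(C) = min {d_S(V,W) : V,W ∈ C, V ≠ W}`. -/
noncomputable def cdist (F : Type) [Field F] {M : Type} [AddCommGroup M] [Module F M]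
    (C : Set (Submodule F M)) : ℕ :=
  sInf {d : ℕ | ∃ V ∈ C, ∃ W ∈ C, V ≠ W ∧ d = sdist F V W}

section helpers2
variable {F : Type} [Field F] {k n₁ n₂ : ℕ}

lemma sdist_comm {M : Type} [AddCommGroup M] [Module F M] (V W : Submodule F M) :
    sdist F V W = sdist F W V := by
  rw [sdist, sdist, add_comm, inf_comm]

lemma finrank_map_of_inj {M N : Type} [AddCommGroup M] [Module F M] [AddCommGroup N]
    [Module F N] (e : M →ₗ[F] N) (he : Function.Injective e) (V : Submodule F M) :
    finrank F ↥(V.map e) = finrank F ↥V :=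
  (LinearEquiv.finrank_eq (Submodule.equivMapOfInjective e he V)).symm

lemma sdist_map {M N : Type} [AddCommGroup M] [Module F M] [AddCommGroup N]
    [Module F N] (e : M →ₗ[F] N) (he : Function.Injective e) (V W : Submodule F M) :
    sdist F (V.map e) (W.map e) = sdist F V W := by
  rw [sdist, sdist, ← Submodule.map_inf e he, finrank_map_of_inj e he,
    finrank_map_of_inj e he, finrank_map_of_inj e he]

lemma sdist_of_inf_bot {M : Type} [AddCommGroup M] [Module F M] (V W : Submodule F M)
    (h : V ⊓ W = ⊥) : sdist F V W = finrank F ↥V + finrank F ↥W := by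
  rw [sdist, h]
  simp

/-- bound on intersection dimension via projecting to the left block -/
lemma finrank_inf_le_left (A A' : Matrix (Fin k) (Fin n₁) F)
    (B B' : Matrix (Fin k) (Fin n₂) F) (hA : Function.Injective A.vecMulLinear) :
    finrank F ↥(rowSpace F (hcat A B) ⊓ rowSpace F (hcat A' B')) ≤
      finrank F ↥(rowSpace F A ⊓ rowSpace F A') := by
  have hmem : ∀ v ∈ rowSpace F (hcat A B) ⊓ rowSpace F (hcat A' B'),
      Lmap F n₁ n₂ v ∈ rowSpace F A ⊓ rowSpace F A' := by
    intro v hv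
    rw [Submodule.mem_inf] at hv
    obtain ⟨hv1, hv2⟩ := hv
    rw [mem_rowSpace] at hv1 hv2
    obtain ⟨x, rfl⟩ := hv1
    obtain ⟨y, hy⟩ := hv2
    rw [Submodule.mem_inf]
    constructor
    · rw [vecMul_hcat, Lmap_append, mem_rowSpace]; exact ⟨x, rfl⟩
    · rw [← hy, vecMul_hcat, Lmap_append, mem_rowSpace]; exact ⟨y, rfl⟩
  have hf : Function.Injective ((Lmap F n₁ n₂).restrict hmem) := by
    rw [← LinearMap.ker_eq_bot, LinearMap.ker_eq_bot']
    rintro ⟨v, hv⟩ h0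
    have h0' : Lmap F n₁ n₂ v = 0 := congrArg Subtype.val h0
    obtain ⟨x, rfl⟩ := (mem_rowSpace _ _).mp hv.1
    rw [vecMul_hcat, Lmap_append] at h0'
    have hx : x = 0 := by
      rw [← LinearMap.ker_eq_bot, LinearMap.ker_eq_bot'] at hA
      exact hA x (by rwa [Matrix.vecMulLinear_apply])
    subst hx
    ext j
    simp [Matrix.zero_vecMul]
  exact LinearMap.finrank_le_finrank_of_injective hf

/-- bound on intersection dimension via projecting to the right block -/
lemma finrank_inf_le_right (A A' : Matrix (Fin k) (Fin n₁) F)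
    (B B' : Matrix (Fin k) (Fin n₂) F) (hB : Function.Injective B.vecMulLinear) :
    finrank F ↥(rowSpace F (hcat A B) ⊓ rowSpace F (hcat A' B')) ≤
      finrank F ↥(rowSpace F B ⊓ rowSpace F B') := by
  have hmem : ∀ v ∈ rowSpace F (hcat A B) ⊓ rowSpace F (hcat A' B'),
      Rmap F n₁ n₂ v ∈ rowSpace F B ⊓ rowSpace F B' := by
    intro v hv
    rw [Submodule.mem_inf] at hv
    obtain ⟨hv1, hv2⟩ := hv
    rw [mem_rowSpace] at hv1 hv2
    obtain ⟨x, rfl⟩ := hv1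
    obtain ⟨y, hy⟩ := hv2
    rw [Submodule.mem_inf]
    constructor
    · rw [vecMul_hcat, Rmap_append, mem_rowSpace]; exact ⟨x, rfl⟩
    · rw [← hy, vecMul_hcat, Rmap_append, mem_rowSpace]; exact ⟨y, rfl⟩
  have hf : Function.Injective ((Rmap F n₁ n₂).restrict hmem) := by
    rw [← LinearMap.ker_eq_bot, LinearMap.ker_eq_bot']
    rintro ⟨v, hv⟩ h0
    have h0' : Rmap F n₁ n₂ v = 0 := congrArg Subtype.val h0
    obtain ⟨x, rfl⟩ := (mem_rowSpace _ _).mp hv.1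
    rw [vecMul_hcat, Rmap_append] at h0'
    have hx : x = 0 := by
      rw [← LinearMap.ker_eq_bot, LinearMap.ker_eq_bot'] at hB
      exact hB x (by rwa [Matrix.vecMulLinear_apply])
    subst hx
    ext j
    simp [Matrix.zero_vecMul]
  exact LinearMap.finrank_le_finrank_of_injective hf

lemma inf13 (A A' : Matrix (Fin k) (Fin n₁) F) (B' : Matrix (Fin k) (Fin n₂) F)
    (hB' : Function.Injective B'.vecMulLinear) :
    rowSpace F (hcat A (0 : Matrix (Fin k) (Fin n₂) F)) ⊓ rowSpace F (hcat A' B') = ⊥ := by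
  apply (Submodule.eq_bot_iff _).mpr
  intro v hv
  rw [Submodule.mem_inf] at hv
  obtain ⟨hv1, hv2⟩ := hv
  rw [mem_rowSpace] at hv1 hv2
  obtain ⟨x, rfl⟩ := hv1
  obtain ⟨y, hy⟩ := hv2
  have h0 : Matrix.vecMul y B' = 0 := by
    have := congrArg (Rmap F n₁ n₂) hy
    rwa [vecMul_hcat, vecMul_hcat, Rmap_append, Rmap_append, Matrix.vecMul_zero] at this
  have hy0 : y = 0 := by
    rw [← LinearMap.ker_eq_bot, LinearMap.ker_eq_bot'] at hB'
    exact hB' y (by rwa [Matrix.vecMulLinear_apply])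
  subst hy0
  rw [← hy, Matrix.zero_vecMul]

lemma inf23 (B : Matrix (Fin k) (Fin n₂) F) (A' : Matrix (Fin k) (Fin n₁) F)
    (B' : Matrix (Fin k) (Fin n₂) F) (hA' : Function.Injective A'.vecMulLinear) :
    rowSpace F (hcat (0 : Matrix (Fin k) (Fin n₁) F) B) ⊓ rowSpace F (hcat A' B') = ⊥ := by
  apply (Submodule.eq_bot_iff _).mpr
  intro v hv
  rw [Submodule.mem_inf] at hv
  obtain ⟨hv1, hv2⟩ := hv
  rw [mem_rowSpace] at hv1 hv2
  obtain ⟨x, rfl⟩ := hv1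
  obtain ⟨y, hy⟩ := hv2
  have h0 : Matrix.vecMul y A' = 0 := by
    have := congrArg (Lmap F n₁ n₂) hy
    rwa [vecMul_hcat, vecMul_hcat, Lmap_append, Lmap_append, Matrix.vecMul_zero] at this
  have hy0 : y = 0 := by
    rw [← LinearMap.ker_eq_bot, LinearMap.ker_eq_bot'] at hA'
    exact hA' y (by rwa [Matrix.vecMulLinear_apply])
  subst hy0
  rw [← hy, Matrix.zero_vecMul]

lemma map_Lmap_rowSpace_hcat (A : Matrix (Fin k) (Fin n₁) F) (B : Matrix (Fin k) (Fin n₂) F) :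
    (rowSpace F (hcat A B)).map (Lmap F n₁ n₂) = rowSpace F A := by
  ext v
  simp only [Submodule.mem_map, mem_rowSpace]
  constructor
  · rintro ⟨w, ⟨x, rfl⟩, rfl⟩
    exact ⟨x, by rw [vecMul_hcat, Lmap_append]⟩
  · rintro ⟨x, rfl⟩
    exact ⟨Matrix.vecMul x (hcat A B), ⟨x, rfl⟩, by rw [vecMul_hcat, Lmap_append]⟩

lemma map_Rmap_rowSpace_hcat (A : Matrix (Fin k) (Fin n₁) F) (B : Matrix (Fin k) (Fin n₂) F) :
    (rowSpace F (hcat A B)).map (Rmap F n₁ n₂) = rowSpace F B := by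
  ext v
  simp only [Submodule.mem_map, mem_rowSpace]
  constructor
  · rintro ⟨w, ⟨x, rfl⟩, rfl⟩
    exact ⟨x, by rw [vecMul_hcat, Rmap_append]⟩
  · rintro ⟨x, rfl⟩
    exact ⟨Matrix.vecMul x (hcat A B), ⟨x, rfl⟩, by rw [vecMul_hcat, Rmap_append]⟩

end helpers2
/-- For `i = 1,2` let `C_i = {im U_{i,l} : l ∈ [N_i]}` be an
`(n_i, N_i, d_i, k)_q` code (rank-`k` matrices with pairwise distinct rowspaces).  Then
`C = C̃_1 ∪ C̃_2 ∪ C̃_3` built by linkage is an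
`(n_1+n_2, N_1+N_2+N_1N_2, min{d_1,d_2}, k)_q` code. -/
theorem stmt14 (q k n₁ n₂ N₁ N₂ d₁ d₂ : ℕ) (F : Type) [Field F] [Finite F]
    (hq : Nat.card F = q) (hN₁ : 2 ≤ N₁) (hN₂ : 2 ≤ N₂)
    (U₁ : Fin N₁ → Matrix (Fin k) (Fin n₁) F) (U₂ : Fin N₂ → Matrix (Fin k) (Fin n₂) F)
    (hrk₁ : ∀ l, Module.finrank F ↥(rowSpace F (U₁ l)) = k)
    (hrk₂ : ∀ l, Module.finrank F ↥(rowSpace F (U₂ l)) = k)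
    (hinj₁ : Function.Injective fun l => rowSpace F (U₁ l))
    (hinj₂ : Function.Injective fun l => rowSpace F (U₂ l))
    (hd₁ : cdist F {W | ∃ l, W = rowSpace F (U₁ l)} = d₁)
    (hd₂ : cdist F {W | ∃ l, W = rowSpace F (U₂ l)} = d₂)
    (C : Set (Submodule F (Fin (n₁ + n₂) → F)))
    (hC : C = {W | ∃ l, W = rowSpace F (hcat (U₁ l) 0)} ∪
              {W | ∃ l, W = rowSpace F (hcat 0 (U₂ l))} ∪
              {W | ∃ l m, W = rowSpace F (hcat (U₁ l) (U₂ m))}) :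
    (∀ W ∈ C, Module.finrank F ↥W = k) ∧
    Nat.card C = N₁ + N₂ + N₁ * N₂ ∧
    cdist F C = min d₁ d₂ := by
  have hA : ∀ l, Function.Injective (U₁ l).vecMulLinear :=
    fun l => vecMulLinear_inj_of_rank _ (hrk₁ l)
  have hB : ∀ m, Function.Injective (U₂ m).vecMulLinear :=
    fun m => vecMulLinear_inj_of_rank _ (hrk₂ m)
  -- ranks of the three kinds of elements
  have rk1 : ∀ l, finrank F ↥(rowSpace F (hcat (U₁ l) (0 : Matrix (Fin k) (Fin n₂) F))) = k :=
    fun l => finrank_rowSpace_of_inj _ (hcat_inj_left _ _ (hA l))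
  have rk2 : ∀ m, finrank F ↥(rowSpace F (hcat (0 : Matrix (Fin k) (Fin n₁) F) (U₂ m))) = k :=
    fun m => finrank_rowSpace_of_inj _ (hcat_inj_right _ _ (hB m))
  have rk3 : ∀ l m, finrank F ↥(rowSpace F (hcat (U₁ l) (U₂ m))) = k :=
    fun l m => finrank_rowSpace_of_inj _ (hcat_inj_left _ _ (hA l))
  have rank_all : ∀ W ∈ C, finrank F ↥W = k := by
    intro W hW
    rw [hC] at hW
    rcases hW with (⟨l, rfl⟩ | ⟨l, rfl⟩) | ⟨l, m, rfl⟩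
    · exact rk1 l
    · exact rk2 l
    · exact rk3 l m
  -- two distinct indices
  have i0 : Fin N₁ := ⟨0, by omega⟩
  have hne₁ : rowSpace F (U₁ ⟨0, by omega⟩) ≠ rowSpace F (U₁ ⟨1, by omega⟩) :=
    hinj₁.ne (by simp [Fin.ext_iff])
  have hne₂ : rowSpace F (U₂ ⟨0, by omega⟩) ≠ rowSpace F (U₂ ⟨1, by omega⟩) :=
    hinj₂.ne (by simp [Fin.ext_iff])
  -- k is positive
  have hk : 1 ≤ k := by
    by_contra h
    have hk0 : k = 0 := by omega
    apply hne₁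
    have e0 : rowSpace F (U₁ ⟨0, by omega⟩) = ⊥ :=
      Submodule.finrank_eq_zero.mp (by rw [hrk₁]; omega)
    have e1 : rowSpace F (U₁ ⟨1, by omega⟩) = ⊥ :=
      Submodule.finrank_eq_zero.mp (by rw [hrk₁]; omega)
    rw [e0, e1]
  -- d₁ and d₂ belong to the distance sets of the original codes
  have hd1S : d₁ ∈ {d : ℕ | ∃ V ∈ {W | ∃ l, W = rowSpace F (U₁ l)},
      ∃ W ∈ {W | ∃ l, W = rowSpace F (U₁ l)}, V ≠ W ∧ d = sdist F V W} := by
    rw [← hd₁]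
    exact Nat.sInf_mem ⟨_, _, ⟨⟨0, by omega⟩, rfl⟩, _, ⟨⟨1, by omega⟩, rfl⟩, hne₁, rfl⟩
  have hd2S : d₂ ∈ {d : ℕ | ∃ V ∈ {W | ∃ l, W = rowSpace F (U₂ l)},
      ∃ W ∈ {W | ∃ l, W = rowSpace F (U₂ l)}, V ≠ W ∧ d = sdist F V W} := by
    rw [← hd₂]
    exact Nat.sInf_mem ⟨_, _, ⟨⟨0, by omega⟩, rfl⟩, _, ⟨⟨1, by omega⟩, rfl⟩, hne₂, rfl⟩
  have hd1le : d₁ ≤ k + k := by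
    obtain ⟨V, ⟨l, rfl⟩, W, ⟨l', rfl⟩, hn, heq⟩ := hd1S
    have : sdist F (rowSpace F (U₁ l)) (rowSpace F (U₁ l')) ≤ k + k := by
      rw [sdist, hrk₁, hrk₁]; omega
    omega
  have hd2le : d₂ ≤ k + k := by
    obtain ⟨V, ⟨l, rfl⟩, W, ⟨l', rfl⟩, hn, heq⟩ := hd2S
    have : sdist F (rowSpace F (U₂ l)) (rowSpace F (U₂ l')) ≤ k + k := by
      rw [sdist, hrk₂, hrk₂]; omega
    omega
  -- lower bounds from the original codes
  have hS₁ : ∀ l l', rowSpace F (U₁ l) ≠ rowSpace F (U₁ l') →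
      d₁ ≤ sdist F (rowSpace F (U₁ l)) (rowSpace F (U₁ l')) := by
    intro l l' h
    rw [← hd₁]
    exact Nat.sInf_le ⟨_, ⟨l, rfl⟩, _, ⟨l', rfl⟩, h, rfl⟩
  have hS₂ : ∀ m m', rowSpace F (U₂ m) ≠ rowSpace F (U₂ m') →
      d₂ ≤ sdist F (rowSpace F (U₂ m)) (rowSpace F (U₂ m')) := by
    intro m m' h
    rw [← hd₂]
    exact Nat.sInf_le ⟨_, ⟨m, rfl⟩, _, ⟨m', rfl⟩, h, rfl⟩
  -- distance bound for trivially intersecting pairs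
  have cross : ∀ (V W : Submodule F (Fin (n₁ + n₂) → F)), finrank F ↥V = k →
      finrank F ↥W = k → V ⊓ W = ⊥ → min d₁ d₂ ≤ sdist F V W := by
    intro V W h1 h2 h3
    rw [sdist_of_inf_bot _ _ h3, h1, h2]
    exact le_trans (min_le_left _ _) hd1le
  -- distinctness from trivial intersection
  have ne_of_bot : ∀ (V W : Submodule F (Fin (n₁ + n₂) → F)), finrank F ↥V = k →
      V ⊓ W = ⊥ → V ≠ W := by
    intro V W h1 h3 h
    rw [h, inf_idem] at h3
    rw [h, h3] at h1
    simp at h1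
    omega
  -- distance bound within the third family
  have le33L : ∀ l l' m m', l ≠ l' → min d₁ d₂ ≤
      sdist F (rowSpace F (hcat (U₁ l) (U₂ m))) (rowSpace F (hcat (U₁ l') (U₂ m'))) := by
    intro l l' m m' hll
    have h1 := finrank_inf_le_left (U₁ l) (U₁ l') (U₂ m) (U₂ m') (hA l)
    have h2 := hS₁ l l' (hinj₁.ne hll)
    have e1 : sdist F (rowSpace F (U₁ l)) (rowSpace F (U₁ l')) =
        k + k - 2 * finrank F ↥(rowSpace F (U₁ l) ⊓ rowSpace F (U₁ l')) := by
      rw [sdist, hrk₁, hrk₁]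
    have e2 : sdist F (rowSpace F (hcat (U₁ l) (U₂ m))) (rowSpace F (hcat (U₁ l') (U₂ m'))) =
        k + k - 2 * finrank F ↥(rowSpace F (hcat (U₁ l) (U₂ m)) ⊓
          rowSpace F (hcat (U₁ l') (U₂ m'))) := by
      rw [sdist, rk3, rk3]
    have h3 := min_le_left d₁ d₂
    omega
  have le33R : ∀ l l' m m', m ≠ m' → min d₁ d₂ ≤
      sdist F (rowSpace F (hcat (U₁ l) (U₂ m))) (rowSpace F (hcat (U₁ l') (U₂ m'))) := by
    intro l l' m m' hmm
    have h1 := finrank_inf_le_right (U₁ l) (U₁ l') (U₂ m) (U₂ m') (hB m)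
    have h2 := hS₂ m m' (hinj₂.ne hmm)
    have e1 : sdist F (rowSpace F (U₂ m)) (rowSpace F (U₂ m')) =
        k + k - 2 * finrank F ↥(rowSpace F (U₂ m) ⊓ rowSpace F (U₂ m')) := by
      rw [sdist, hrk₂, hrk₂]
    have e2 : sdist F (rowSpace F (hcat (U₁ l) (U₂ m))) (rowSpace F (hcat (U₁ l') (U₂ m'))) =
        k + k - 2 * finrank F ↥(rowSpace F (hcat (U₁ l) (U₂ m)) ⊓
          rowSpace F (hcat (U₁ l') (U₂ m'))) := by
      rw [sdist, rk3, rk3]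
    have h3 := min_le_right d₁ d₂
    omega
  -- the key lower bound on distances in C
  have key : ∀ V ∈ C, ∀ W ∈ C, V ≠ W → min d₁ d₂ ≤ sdist F V W := by
    intro V hV W hW hne
    rw [hC] at hV hW
    rcases hV with (⟨l, rfl⟩ | ⟨l, rfl⟩) | ⟨l, m, rfl⟩ <;>
      rcases hW with (⟨l', rfl⟩ | ⟨l', rfl⟩) | ⟨l', m', rfl⟩
    · -- 1,1
      have hne' : rowSpace F (U₁ l) ≠ rowSpace F (U₁ l') := by
        intro h
        exact hne (by rw [rowSpace_hcat_zero_right, rowSpace_hcat_zero_right, h])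
      rw [rowSpace_hcat_zero_right, rowSpace_hcat_zero_right, sdist_map _ emb₁_inj]
      exact le_trans (min_le_left _ _) (hS₁ l l' hne')
    · -- 1,2
      exact cross _ _ (rk1 l) (rk2 l') (inf13 (U₁ l) 0 (U₂ l') (hB l'))
    · -- 1,3
      exact cross _ _ (rk1 l) (rk3 l' m') (inf13 (U₁ l) (U₁ l') (U₂ m') (hB m'))
    · -- 2,1
      rw [sdist_comm]
      exact cross _ _ (rk1 l') (rk2 l) (inf13 (U₁ l') 0 (U₂ l) (hB l))
    · -- 2,2
      have hne' : rowSpace F (U₂ l) ≠ rowSpace F (U₂ l') := by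
        intro h
        exact hne (by rw [rowSpace_hcat_zero_left, rowSpace_hcat_zero_left, h])
      rw [rowSpace_hcat_zero_left, rowSpace_hcat_zero_left, sdist_map _ emb₂_inj]
      exact le_trans (min_le_right _ _) (hS₂ l l' hne')
    · -- 2,3
      exact cross _ _ (rk2 l) (rk3 l' m') (inf23 (U₂ l) (U₁ l') (U₂ m') (hA l'))
    · -- 3,1
      rw [sdist_comm]
      exact cross _ _ (rk1 l') (rk3 l m) (inf13 (U₁ l') (U₁ l) (U₂ m) (hB m))
    · -- 3,2
      rw [sdist_comm]
      exact cross _ _ (rk2 l') (rk3 l m) (inf23 (U₂ l') (U₁ l) (U₂ m) (hA l))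
    · -- 3,3
      by_cases hll : l = l'
      · subst hll
        have hmm : m ≠ m' := by
          intro h; subst h; exact hne rfl
        exact le33R l l m m' hmm
      · exact le33L l l' m m' hll
  refine ⟨rank_all, ?_, ?_⟩
  · -- cardinality
    set g : (Fin N₁ ⊕ (Fin N₂ ⊕ Fin N₁ × Fin N₂)) → Submodule F (Fin (n₁ + n₂) → F) :=
      Sum.elim (fun l => rowSpace F (hcat (U₁ l) (0 : Matrix (Fin k) (Fin n₂) F)))
        (Sum.elim (fun m => rowSpace F (hcat (0 : Matrix (Fin k) (Fin n₁) F) (U₂ m)))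
          (fun p => rowSpace F (hcat (U₁ p.1) (U₂ p.2)))) with hg
    have hrange : C = Set.range g := by
      rw [hC]
      ext W
      constructor
      · rintro ((⟨l, rfl⟩ | ⟨l, rfl⟩) | ⟨l, m, rfl⟩)
        · exact ⟨Sum.inl l, rfl⟩
        · exact ⟨Sum.inr (Sum.inl l), rfl⟩
        · exact ⟨Sum.inr (Sum.inr (l, m)), rfl⟩
      · rintro ⟨(l | m | ⟨l, m⟩), rfl⟩
        · exact Or.inl (Or.inl ⟨l, rfl⟩)
        · exact Or.inl (Or.inr ⟨m, rfl⟩)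
        · exact Or.inr ⟨l, m, rfl⟩
    have hginj : Function.Injective g := by
      rintro (l | m | ⟨l, m⟩) (l' | m' | ⟨l', m'⟩) h <;>
        simp only [hg, Sum.elim_inl, Sum.elim_inr] at h
      · -- 1,1
        rw [rowSpace_hcat_zero_right, rowSpace_hcat_zero_right] at h
        exact congrArg Sum.inl (hinj₁ (Submodule.map_injective_of_injective emb₁_inj h))
      · exact absurd h (ne_of_bot _ _ (rk1 l) (inf13 (U₁ l) 0 (U₂ m') (hB m')))
      · exact absurd h (ne_of_bot _ _ (rk1 l) (inf13 (U₁ l) (U₁ l') (U₂ m') (hB m')))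
      · exact absurd h.symm (ne_of_bot _ _ (rk1 l') (inf13 (U₁ l') 0 (U₂ m) (hB m)))
      · -- 2,2
        rw [rowSpace_hcat_zero_left, rowSpace_hcat_zero_left] at h
        exact congrArg (Sum.inr ∘ Sum.inl) (hinj₂ (Submodule.map_injective_of_injective emb₂_inj h))
      · exact absurd h (ne_of_bot _ _ (rk2 m) (inf23 (U₂ m) (U₁ l') (U₂ m') (hA l')))
      · exact absurd h.symm (ne_of_bot _ _ (rk1 l') (inf13 (U₁ l') (U₁ l) (U₂ m) (hB m)))
      · exact absurd h.symm (ne_of_bot _ _ (rk2 m') (inf23 (U₂ m') (U₁ l) (U₂ m) (hA l)))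
      · -- 3,3
        have hL := congrArg (Submodule.map (Lmap F n₁ n₂)) h
        have hR := congrArg (Submodule.map (Rmap F n₁ n₂)) h
        rw [map_Lmap_rowSpace_hcat, map_Lmap_rowSpace_hcat] at hL
        rw [map_Rmap_rowSpace_hcat, map_Rmap_rowSpace_hcat] at hR
        have : l = l' := hinj₁ hL
        have : m = m' := hinj₂ hR
        subst ‹l = l'›; subst ‹m = m'›; rfl
    rw [hrange, Nat.card_range_of_injective hginj]
    simp only [Nat.card_eq_fintype_card, Fintype.card_sum, Fintype.card_prod, Fintype.card_fin]
    ring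
  · -- distance
    have hmem : min d₁ d₂ ∈ {d : ℕ | ∃ V ∈ C, ∃ W ∈ C, V ≠ W ∧ d = sdist F V W} := by
      rcases le_total d₁ d₂ with h | h
      · rw [min_eq_left h]
        obtain ⟨V, ⟨l, rfl⟩, W, ⟨l', rfl⟩, hn, heq⟩ := hd1S
        refine ⟨rowSpace F (hcat (U₁ l) (0 : Matrix (Fin k) (Fin n₂) F)), ?_,
          rowSpace F (hcat (U₁ l') (0 : Matrix (Fin k) (Fin n₂) F)), ?_, ?_, ?_⟩
        · rw [hC]; exact Or.inl (Or.inl ⟨l, rfl⟩)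
        · rw [hC]; exact Or.inl (Or.inl ⟨l', rfl⟩)
        · intro hcontra
          rw [rowSpace_hcat_zero_right, rowSpace_hcat_zero_right] at hcontra
          exact hn (Submodule.map_injective_of_injective emb₁_inj hcontra)
        · rw [rowSpace_hcat_zero_right, rowSpace_hcat_zero_right, sdist_map _ emb₁_inj]
          exact heq
      · rw [min_eq_right h]
        obtain ⟨V, ⟨m, rfl⟩, W, ⟨m', rfl⟩, hn, heq⟩ := hd2S
        refine ⟨rowSpace F (hcat (0 : Matrix (Fin k) (Fin n₁) F) (U₂ m)), ?_,
          rowSpace F (hcat (0 : Matrix (Fin k) (Fin n₁) F) (U₂ m')), ?_, ?_, ?_⟩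
        · rw [hC]; exact Or.inl (Or.inr ⟨m, rfl⟩)
        · rw [hC]; exact Or.inl (Or.inr ⟨m', rfl⟩)
        · intro hcontra
          rw [rowSpace_hcat_zero_left, rowSpace_hcat_zero_left] at hcontra
          exact hn (Submodule.map_injective_of_injective emb₂_inj hcontra)
        · rw [rowSpace_hcat_zero_left, rowSpace_hcat_zero_left, sdist_map _ emb₂_inj]
          exact heq
    refine le_antisymm (Nat.sInf_le hmem) (le_csInf ⟨_, hmem⟩ ?_)
    rintro d ⟨V, hV, W, hW, hne, rfl⟩
    exact key V hV W hW hne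
end

section
/- Let t ≥ 2 and for i = 1, …, t let C_i be a primitive cyclic orbit code: C_i = {im(U_i M_i^l) : 0 ≤ l} where M_i ∈ GL_{n_i}(F_q) is the companion matrix of the minimal polynomial of a primitive element of F_{q^{n_i}} and U_i ∈ F_q^{k×n_i} has rank k, the generating subspace contains 1 and has best friend F_{q^{r_i}}, so that |C_i| = (q^{n_i} − 1)/(q^{r_i} − 1). Let C be the linkage code C_1 ⊛ ⋯ ⊛ C_t of these codes, and n := n_1 + ⋯ + n_t. Then |C| = (∏_{i=1}^t ((q^{n_i} − 1)/(q^{r_i} − 1) + 1)) − 1 ≤ (q^n − 1)/(q − 1), with equality if and only if q = 2 and r_i = 1 for all i = 1, …, t. -/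
/-- The horizontal block concatenation `(U_{1,l_1} | ⋯ | U_{t,l_t})`, where the choice
`l i = none` selects the zero matrix `U_{i,0} = 0` in block `i`.  Columns are indexed by
the sigma type `(i : Fin t) × Fin (n i)`, representing `Fin (n 1 + ⋯ + n t)`. -/
def linkMat {F : Type} [Field F] {k t : ℕ} {n N : Fin t → ℕ}
    (U : (i : Fin t) → Fin (N i) → Matrix (Fin k) (Fin (n i)) F)
    (l : (i : Fin t) → Option (Fin (N i))) :
    Matrix (Fin k) ((i : Fin t) × Fin (n i)) F :=
  Matrix.of fun a p =>
    match l p.1 with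
    | none => 0
    | some c => U p.1 c a p.2

/-! ### Arithmetic auxiliary lemmas about geometric sums -/

open Finset in
private lemma geomS_add (q a b : ℕ) :
    ∑ j ∈ range (a + b), q ^ j =
      (∑ j ∈ range a, q ^ j) + q ^ a * ∑ j ∈ range b, q ^ j := by
  rw [Finset.sum_range_add, Finset.mul_sum]
  simp [pow_add]

open Finset in
private lemma geomS_pos {q : ℕ} (hq : 1 ≤ q) {m : ℕ} (hm : 1 ≤ m) :
    1 ≤ ∑ j ∈ range m, q ^ j := by
  calc 1 = q ^ 0 := (pow_zero q).symm
  _ ≤ ∑ j ∈ range m, q ^ j :=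
    Finset.single_le_sum (f := fun j => q ^ j) (fun i _ => Nat.zero_le _)
      (Finset.mem_range.2 hm)

open Finset in
private lemma geomS_mul (q r : ℕ) : ∀ s : ℕ,
    ∑ j ∈ range (r * s), q ^ j =
      (∑ j ∈ range s, (q ^ r) ^ j) * ∑ j ∈ range r, q ^ j := by
  intro s
  induction s with
  | zero => simp
  | succ s ih =>
      rw [Nat.mul_succ, geomS_add, ih, Finset.sum_range_succ, add_mul, ← pow_mul]

open Finset in
private lemma geomS_two (m : ℕ) : (∑ j ∈ range m, 2 ^ j) + 1 = 2 ^ m := by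
  induction m with
  | zero => simp
  | succ m ih => rw [Finset.sum_range_succ, pow_succ]; omega

open Finset in
private lemma geomS_le {q : ℕ} (hq : 2 ≤ q) {m : ℕ} (hm : 1 ≤ m) :
    (∑ j ∈ range m, q ^ j) + 1 ≤ q ^ m := by
  induction m with
  | zero => omega
  | succ m ih =>
      rcases Nat.eq_or_lt_of_le (Nat.zero_le m) with h | h
      · simp [← h, Finset.sum_range_one]; omega
      · have h1 := ih h
        rw [Finset.sum_range_succ, pow_succ]
        have : q ^ m * 2 ≤ q ^ m * q := Nat.mul_le_mul_left _ hq
        omega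

open Finset in
private lemma geomS_lt {q : ℕ} (hq : 3 ≤ q) {m : ℕ} (hm : 1 ≤ m) :
    (∑ j ∈ range m, q ^ j) + 1 < q ^ m := by
  induction m with
  | zero => omega
  | succ m ih =>
      rcases Nat.eq_or_lt_of_le (Nat.zero_le m) with h | h
      · simp [← h, Finset.sum_range_one]; omega
      · have h1 := ih h
        rw [Finset.sum_range_succ, pow_succ]
        have : q ^ m * 3 ≤ q ^ m * q := Nat.mul_le_mul_left _ hq
        have : 1 ≤ q ^ m := Nat.one_le_pow _ _ (by omega)
        omega

open Finset in
private lemma prodG_le {q : ℕ} (hq : 2 ≤ q) {ι : Type*} [DecidableEq ι] (n : ι → ℕ)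
    (s : Finset ι) :
    ∏ i ∈ s, ((∑ j ∈ range (n i), q ^ j) + 1) ≤
      (∑ j ∈ range (∑ i ∈ s, n i), q ^ j) + 1 := by
  induction s using Finset.cons_induction with
  | empty => simp
  | cons a s ha ih =>
      rw [Finset.prod_cons, Finset.sum_cons, geomS_add]
      set A := ∑ j ∈ range (n a), q ^ j with hA
      set B := ∑ j ∈ range (∑ i ∈ s, n i), q ^ j with hB
      have h1 : A + 1 ≤ q ^ n a := by
        rcases Nat.eq_zero_or_pos (n a) with h | h
        · simp [hA, h]
        · exact geomS_le hq h
      calc (A + 1) * ∏ i ∈ s, ((∑ j ∈ range (n i), q ^ j) + 1)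
          ≤ (A + 1) * (B + 1) := Nat.mul_le_mul_left _ ih
        _ = (A + 1) * B + A + 1 := by ring
        _ ≤ q ^ n a * B + A + 1 := by
            have := Nat.mul_le_mul_right B h1; omega
        _ = A + q ^ n a * B + 1 := by ring

open Finset in
private lemma prodG_lt {q : ℕ} (hq : 3 ≤ q) {ι : Type*} [DecidableEq ι] (n : ι → ℕ)
    (s : Finset ι) (hn : ∀ i ∈ s, 1 ≤ n i) (hcard : 2 ≤ s.card) :
    ∏ i ∈ s, ((∑ j ∈ range (n i), q ^ j) + 1) <
      (∑ j ∈ range (∑ i ∈ s, n i), q ^ j) + 1 := by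
  obtain ⟨a, ha⟩ : s.Nonempty := Finset.card_pos.1 (by omega)
  have hs' : (s.erase a).Nonempty := by
    rw [← Finset.card_pos, Finset.card_erase_of_mem ha]; omega
  obtain ⟨b, hb⟩ := hs'
  rw [← Finset.mul_prod_erase s _ ha, ← Finset.add_sum_erase s n ha, geomS_add]
  set A := ∑ j ∈ range (n a), q ^ j with hA
  set B := ∑ j ∈ range (∑ i ∈ s.erase a, n i), q ^ j with hB
  have h1 : A + 1 < q ^ n a := geomS_lt hq (hn a ha)
  have hB1 : 1 ≤ B := by
    refine geomS_pos (by omega) ?_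
    calc 1 ≤ n b := hn b (Finset.mem_of_mem_erase hb)
      _ ≤ ∑ i ∈ s.erase a, n i := Finset.single_le_sum (fun i _ => Nat.zero_le _) hb
  calc (A + 1) * ∏ i ∈ s.erase a, ((∑ j ∈ range (n i), q ^ j) + 1)
      ≤ (A + 1) * (B + 1) := Nat.mul_le_mul_left _ (prodG_le (by omega) n _)
    _ = (A + 1) * B + A + 1 := by ring
    _ < q ^ n a * B + A + 1 := by
        have := Nat.mul_lt_mul_of_lt_of_le h1 (le_refl B) hB1; omega
    _ = A + q ^ n a * B + 1 := by ring

/-! ### Linear algebra auxiliary lemmas -/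

private lemma rowSpace_zero {F : Type} [Field F] {k : ℕ} {ι : Type} [Fintype ι] :
    rowSpace F (0 : Matrix (Fin k) ι F) = ⊥ := by
  rw [rowSpace, LinearMap.range_eq_bot]
  ext x j
  simp [Matrix.vecMul, dotProduct]

private lemma rowSpace_map_block {F : Type} [Field F] {k t : ℕ} {n : Fin t → ℕ}
    (A : Matrix (Fin k) ((i : Fin t) × Fin (n i)) F) (i : Fin t) :
    Submodule.map
      (LinearMap.funLeft F F (fun p : Fin (n i) => (⟨i, p⟩ : (j : Fin t) × Fin (n j))))
      (rowSpace F A) =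
      rowSpace F (A.submatrix id (fun p : Fin (n i) => (⟨i, p⟩ : (j : Fin t) × Fin (n j)))) := by
  have h : (LinearMap.funLeft F F
        (fun p : Fin (n i) => (⟨i, p⟩ : (j : Fin t) × Fin (n j)))).comp A.vecMulLinear =
      (A.submatrix id (fun p : Fin (n i) =>
        (⟨i, p⟩ : (j : Fin t) × Fin (n j)))).vecMulLinear := by
    apply LinearMap.ext
    intro x
    funext p
    simp [Matrix.vecMul, dotProduct]
  rw [rowSpace, rowSpace, ← LinearMap.range_comp, h]

private lemma vecMul_injective {F : Type} [Field F] {m : ℕ}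
    {B : Matrix (Fin m) (Fin m) F} (hB : IsUnit B) {v : Fin m → F}
    (hv : Matrix.vecMul v B = 0) : v = 0 := by
  have h1 : B * (↑hB.unit⁻¹ : Matrix (Fin m) (Fin m) F) = 1 := hB.mul_val_inv
  calc v = Matrix.vecMul v 1 := (Matrix.vecMul_one v).symm
    _ = Matrix.vecMul (Matrix.vecMul v B) (↑hB.unit⁻¹ : Matrix (Fin m) (Fin m) F) := by
        rw [Matrix.vecMul_vecMul, h1]
    _ = 0 := by rw [hv]; exact Matrix.zero_vecMul _

private lemma linkMat_block_none {F : Type} [Field F] {k t : ℕ} {n N : Fin t → ℕ}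
    (V : (i : Fin t) → Fin (N i) → Matrix (Fin k) (Fin (n i)) F)
    (l : (i : Fin t) → Option (Fin (N i))) {i : Fin t} (h : l i = none) :
    (linkMat V l).submatrix id (fun p : Fin (n i) => (⟨i, p⟩ : (j : Fin t) × Fin (n j))) = 0 := by
  ext a p
  simp only [Matrix.submatrix_apply, id, linkMat, Matrix.of_apply]
  rw [h]
  simp

private lemma linkMat_block_some {F : Type} [Field F] {k t : ℕ} {n N : Fin t → ℕ}
    (V : (i : Fin t) → Fin (N i) → Matrix (Fin k) (Fin (n i)) F)
    (l : (i : Fin t) → Option (Fin (N i))) {i : Fin t} {c : Fin (N i)} (h : l i = some c) :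
    (linkMat V l).submatrix id (fun p : Fin (n i) => (⟨i, p⟩ : (j : Fin t) × Fin (n j))) =
      V i c := by
  ext a p
  simp only [Matrix.submatrix_apply, id, linkMat, Matrix.of_apply]
  rw [h]

/-- For `i = 1,…,t` (`t ≥ 2`) let `C_i` be a primitive cyclic orbit code
`C_i = {im(U_i M_i^l) : l ∈ ℕ}` of constant dimension `k ≥ 1` in `F_q^{n_i}`, where `M_i`
is the companion matrix of the minimal polynomial of a primitive element of `F_{q^{n_i}}`
(so `M_i` has order `q^{n_i} − 1`), the generating subspace has best friend `F_{q^{r_i}}`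
(so `r_i ≥ 1`, `r_i ∣ n_i`), and `|C_i| = N_i = (q^{n_i} − 1)/(q^{r_i} − 1)`.  Let `C`
be the linkage code `C_1 ⊛ ⋯ ⊛ C_t` (built from an enumeration `V_i` of `C_i`) and
`n := n_1 + ⋯ + n_t`.  Then `|C| = ∏(N_i + 1) − 1 ≤ (q^n − 1)/(q − 1)`, with equality iff
`q = 2` and `r_i = 1` for all `i`. -/
theorem stmt17 (q k t : ℕ) (ht : 2 ≤ t) (hk : 1 ≤ k) (F : Type) [Field F] [Finite F]
    (hq : Nat.card F = q)
    (n r N : Fin t → ℕ) (hr : ∀ i, 1 ≤ r i) (hrn : ∀ i, r i ∣ n i)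
    (hN : ∀ i, N i = (q ^ n i - 1) / (q ^ r i - 1))
    (M : (i : Fin t) → Matrix (Fin (n i)) (Fin (n i)) F)
    (hM : ∀ i, orderOf (M i) = q ^ n i - 1)
    (U : (i : Fin t) → Matrix (Fin k) (Fin (n i)) F)
    (hrk : ∀ i, Module.finrank F ↥(rowSpace F (U i)) = k)
    (hCi : ∀ i, Nat.card {W : Submodule F (Fin (n i) → F) |
      ∃ l : ℕ, W = rowSpace F (U i * M i ^ l)} = N i)
    (V : (i : Fin t) → Fin (N i) → Matrix (Fin k) (Fin (n i)) F)
    (hV : ∀ i l, ∃ j : ℕ, V i l = U i * M i ^ j)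
    (hVinj : ∀ i, Function.Injective fun l => rowSpace F (V i l))
    (C : Set (Submodule F (((i : Fin t) × Fin (n i)) → F)))
    (hC : C = {W | ∃ l : (i : Fin t) → Option (Fin (N i)),
      l ≠ (fun _ => none) ∧ W = rowSpace F (linkMat V l)}) :
    Nat.card C = (∏ i : Fin t, (N i + 1)) - 1 ∧
    Nat.card C ≤ (q ^ (∑ i : Fin t, n i) - 1) / (q - 1) ∧
    (Nat.card C = (q ^ (∑ i : Fin t, n i) - 1) / (q - 1) ↔
      (q = 2 ∧ ∀ i, r i = 1)) := by
  classical
  -- basic facts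
  have hq2 : 2 ≤ q := by
    rw [← hq]
    have : Nontrivial F := inferInstance
    exact Finite.one_lt_card_iff_nontrivial.2 this
  have hn1 : ∀ i, 1 ≤ n i := by
    intro i
    have h1 : Module.finrank F ↥(rowSpace F (U i)) ≤ Module.finrank F (Fin (n i) → F) :=
      Submodule.finrank_le _
    rw [hrk i, Module.finrank_fin_fun] at h1
    omega
  have hMu : ∀ i, IsUnit (M i) := by
    intro i
    have hd : 1 ≤ orderOf (M i) := by
      rw [hM i]
      have h2 : 2 ≤ q ^ n i :=
        le_trans hq2 (Nat.le_self_pow (by have := hn1 i; omega) q)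
      omega
    exact (orderOf_pos_iff.1 (by omega)).isUnit
  have hVne : ∀ i (c : Fin (N i)), rowSpace F (V i c) ≠ ⊥ := by
    intro i c h
    obtain ⟨j, hj⟩ := hV i c
    have hU : rowSpace F (U i) ≠ ⊥ := by
      intro h0
      have h1 := hrk i
      rw [h0, finrank_bot] at h1
      omega
    obtain ⟨v, hv, hv0⟩ := (Submodule.ne_bot_iff _).1 hU
    obtain ⟨x, hx⟩ := hv
    have hmem : Matrix.vecMul v ((M i) ^ j) ∈ rowSpace F (V i c) := by
      rw [hj]
      refine ⟨x, ?_⟩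
      rw [Matrix.vecMulLinear_apply, ← Matrix.vecMul_vecMul]
      rw [Matrix.vecMulLinear_apply] at hx
      rw [hx]
    rw [h, Submodule.mem_bot] at hmem
    exact hv0 (vecMul_injective ((hMu i).pow j) hmem)
  -- injectivity of the linkage map
  have hinj : Function.Injective
      (fun l : (i : Fin t) → Option (Fin (N i)) => rowSpace F (linkMat V l)) := by
    intro l l' h
    funext i
    have hmap := congrArg (Submodule.map (LinearMap.funLeft F F
      (fun p : Fin (n i) => (⟨i, p⟩ : (j : Fin t) × Fin (n j))))) h
    rw [rowSpace_map_block, rowSpace_map_block] at hmap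
    cases hl : l i with
    | none =>
        cases hl' : l' i with
        | none => rfl
        | some c =>
            exfalso
            rw [linkMat_block_none V l hl, linkMat_block_some V l' hl',
              rowSpace_zero] at hmap
            exact hVne i c hmap.symm
    | some c =>
        cases hl' : l' i with
        | none =>
            exfalso
            rw [linkMat_block_some V l hl, linkMat_block_none V l' hl',
              rowSpace_zero] at hmap
            exact hVne i c hmap
        | some c' =>
            rw [linkMat_block_some V l hl, linkMat_block_some V l' hl'] at hmap
            exact congrArg some (hVinj i hmap)
  -- cardinality of C
  have hCimg : C = (fun l : (i : Fin t) → Option (Fin (N i)) =>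
      rowSpace F (linkMat V l)) '' {l | l ≠ fun _ => none} := by
    rw [hC]
    ext W
    constructor
    · rintro ⟨l, h1, h2⟩; exact ⟨l, h1, h2.symm⟩
    · rintro ⟨l, h1, h2⟩; exact ⟨l, h1, h2.symm⟩
  have hcard1 : Nat.card C = (∏ i : Fin t, (N i + 1)) - 1 := by
    rw [hCimg, Nat.card_coe_set_eq, Set.ncard_image_of_injective _ hinj]
    have hset : {l : (i : Fin t) → Option (Fin (N i)) | l ≠ fun _ => none} =
        Set.univ \ {fun _ => none} := by
      ext l; simp
    rw [hset, Set.ncard_diff_singleton_of_mem (Set.mem_univ _), Set.ncard_univ,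
      Nat.card_eq_fintype_card, Fintype.card_pi]
    congr 1
    exact Finset.prod_congr rfl (fun i _ => by simp)
  -- arithmetic notation
  have hq1 : 1 ≤ q := by omega
  have hqr2 : ∀ i, 2 ≤ q ^ r i := fun i =>
    le_trans hq2 (Nat.le_self_pow (by have := hr i; omega) q)
  have hs1 : ∀ i, 1 ≤ n i / r i := fun i =>
    Nat.one_le_div_iff (by have := hr i; omega) |>.2
      (Nat.le_of_dvd (by have := hn1 i; omega) (hrn i))
  have hNg : ∀ i, N i = ∑ j ∈ Finset.range (n i / r i), (q ^ r i) ^ j := by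
    intro i
    rw [hN i, show q ^ n i = (q ^ r i) ^ (n i / r i) from by
      rw [← pow_mul, Nat.mul_div_cancel' (hrn i)], Nat.geomSum_eq (hqr2 i)]
  have hkey : ∀ i, N i * (∑ j ∈ Finset.range (r i), q ^ j) =
      ∑ j ∈ Finset.range (n i), q ^ j := by
    intro i
    rw [hNg i, ← geomS_mul, Nat.mul_div_cancel' (hrn i)]
  have hN1 : ∀ i, 1 ≤ N i := by
    intro i
    rw [hNg i]
    exact geomS_pos (by have := hqr2 i; omega) (hs1 i)
  have hGr1 : ∀ i, 1 ≤ ∑ j ∈ Finset.range (r i), q ^ j := fun i =>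
    geomS_pos hq1 (hr i)
  have hNle : ∀ i, N i ≤ ∑ j ∈ Finset.range (n i), q ^ j := by
    intro i
    calc N i = N i * 1 := (mul_one _).symm
      _ ≤ N i * (∑ j ∈ Finset.range (r i), q ^ j) :=
          Nat.mul_le_mul_left _ (hGr1 i)
      _ = _ := hkey i
  have hNlt : ∀ i, r i ≠ 1 → N i < ∑ j ∈ Finset.range (n i), q ^ j := by
    intro i hri
    have hr2 : 2 ≤ r i := by have := hr i; omega
    have h3 : 1 + q ≤ ∑ j ∈ Finset.range (r i), q ^ j := by
      calc 1 + q = ∑ j ∈ Finset.range 2, q ^ j := by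
            simp [Finset.sum_range_succ]
        _ ≤ ∑ j ∈ Finset.range (r i), q ^ j :=
            Finset.sum_le_sum_of_subset (Finset.range_subset_range.2 hr2)
    calc N i < N i * (1 + q) := by
          have h1 := hN1 i
          nlinarith
      _ ≤ N i * (∑ j ∈ Finset.range (r i), q ^ j) := Nat.mul_le_mul_left _ h3
      _ = _ := hkey i
  have hprod_le : ∏ i : Fin t, (N i + 1) ≤
      ∏ i : Fin t, ((∑ j ∈ Finset.range (n i), q ^ j) + 1) :=
    Finset.prod_le_prod (fun i _ => Nat.zero_le _) (fun i _ => by have := hNle i; omega)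
  have hG_le : ∏ i : Fin t, ((∑ j ∈ Finset.range (n i), q ^ j) + 1) ≤
      (∑ j ∈ Finset.range (∑ i : Fin t, n i), q ^ j) + 1 := prodG_le hq2 n Finset.univ
  have hprod_pos : 1 ≤ ∏ i : Fin t, (N i + 1) :=
    Finset.one_le_prod' (fun i _ => by omega)
  have hdiv : (q ^ (∑ i : Fin t, n i) - 1) / (q - 1) =
      ∑ j ∈ Finset.range (∑ i : Fin t, n i), q ^ j := (Nat.geomSum_eq hq2 _).symm
  refine ⟨hcard1, ?_, ?_⟩
  · rw [hcard1, hdiv]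
    omega
  · rw [hcard1, hdiv]
    constructor
    · intro heq
      have heq' : ∏ i : Fin t, (N i + 1) =
          (∑ j ∈ Finset.range (∑ i : Fin t, n i), q ^ j) + 1 := by omega
      have hq2' : q = 2 := by
        by_contra hq3
        have h3 : 3 ≤ q := by omega
        have := prodG_lt h3 n Finset.univ (fun i _ => hn1 i)
          (by simpa using ht)
        omega
      refine ⟨hq2', fun i => ?_⟩
      by_contra hri
      have hlt : ∏ i : Fin t, (N i + 1) <
          ∏ i : Fin t, ((∑ j ∈ Finset.range (n i), q ^ j) + 1) := by
        refine Finset.prod_lt_prod (fun i _ => by positivity)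
          (fun i _ => by have := hNle i; omega) ⟨i, Finset.mem_univ i, ?_⟩
        have := hNlt i hri
        omega
      omega
    · rintro ⟨hq2', hr1⟩
      have hNm : ∀ i, N i = ∑ j ∈ Finset.range (n i), q ^ j := by
        intro i
        have h := hkey i
        rw [hr1 i] at h
        simpa [Finset.sum_range_one] using h
      have : ∏ i : Fin t, (N i + 1) =
          (∑ j ∈ Finset.range (∑ i : Fin t, n i), q ^ j) + 1 := by
        subst hq2'
        calc ∏ i : Fin t, (N i + 1)
            = ∏ i : Fin t, 2 ^ n i := by
              refine Finset.prod_congr rfl (fun i _ => ?_)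
              rw [hNm i, geomS_two]
          _ = 2 ^ (∑ i : Fin t, n i) := Finset.prod_pow_eq_pow_sum _ _ _
          _ = _ := (geomS_two _).symm
      omega
end
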